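/- Let κ ∈ ℝ and let (u, h, h1, h2, w) be a smooth solution on ℝ² of the generalized Kaup–Kupershmidt −1 flow system. Then the local conservation law ∂_t( −(1/2)u_x² + (2/3)u³ ) = ∂_x( h2 − u_x·h ) holds at every point of ℝ². -/

import Mathlib

/-- Partial derivative with respect to the first (time) variable. -/
noncomputable def pt (u : ℝ → ℝ → ℝ) : ℝ → ℝ → ℝ := fun t x => deriv (fun s => u s x) t

/-- Partial derivative with respect to the second (space) variable. -/
noncomputable def px (u : ℝ → ℝ → ℝ) : ℝ → ℝ → ℝ := fun t x => deriv (fun y => u t y) x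

/-- Smoothness of a function of two real variables. -/
def Smooth2 (u : ℝ → ℝ → ℝ) : Prop := ContDiff ℝ (⊤ : ℕ∞) (fun p : ℝ × ℝ => u p.1 p.2)

section Helpers

variable {u : ℝ → ℝ → ℝ}

lemma hasDerivAt_fst (hu : Smooth2 u) (t x : ℝ) :
    HasDerivAt (fun s => u s x)
      (fderiv ℝ (fun p : ℝ × ℝ => u p.1 p.2) (t, x) (1, 0)) t := by
  have hF : HasFDerivAt (fun p : ℝ × ℝ => u p.1 p.2)
      (fderiv ℝ (fun p : ℝ × ℝ => u p.1 p.2) (t, x)) (t, x) :=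
    (hu.differentiable (by simp) (t, x)).hasFDerivAt
  have hc : HasDerivAt (fun s : ℝ => (s, x)) ((1 : ℝ), (0 : ℝ)) t :=
    HasDerivAt.prodMk (hasDerivAt_id t) (hasDerivAt_const t x)
  exact hF.comp_hasDerivAt t hc

lemma hasDerivAt_snd (hu : Smooth2 u) (t x : ℝ) :
    HasDerivAt (fun y => u t y)
      (fderiv ℝ (fun p : ℝ × ℝ => u p.1 p.2) (t, x) (0, 1)) x := by
  have hF : HasFDerivAt (fun p : ℝ × ℝ => u p.1 p.2)
      (fderiv ℝ (fun p : ℝ × ℝ => u p.1 p.2) (t, x)) (t, x) :=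
    (hu.differentiable (by simp) (t, x)).hasFDerivAt
  have hc : HasDerivAt (fun y : ℝ => (t, y)) ((0 : ℝ), (1 : ℝ)) x :=
    HasDerivAt.prodMk (hasDerivAt_const x t) (hasDerivAt_id x)
  exact hF.comp_hasDerivAt x hc

lemma pt_eq (hu : Smooth2 u) (t x : ℝ) :
    pt u t x = fderiv ℝ (fun p : ℝ × ℝ => u p.1 p.2) (t, x) (1, 0) :=
  (hasDerivAt_fst hu t x).deriv

lemma px_eq (hu : Smooth2 u) (t x : ℝ) :
    px u t x = fderiv ℝ (fun p : ℝ × ℝ => u p.1 p.2) (t, x) (0, 1) :=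
  (hasDerivAt_snd hu t x).deriv

lemma hasDerivAt_pt (hu : Smooth2 u) (t x : ℝ) :
    HasDerivAt (fun s => u s x) (pt u t x) t := by
  rw [pt_eq hu]; exact hasDerivAt_fst hu t x

lemma hasDerivAt_px (hu : Smooth2 u) (t x : ℝ) :
    HasDerivAt (fun y => u t y) (px u t x) x := by
  rw [px_eq hu]; exact hasDerivAt_snd hu t x

lemma smooth_fderiv_apply (hu : Smooth2 u) (v : ℝ × ℝ) :
    ContDiff ℝ (⊤ : ℕ∞) (fun p : ℝ × ℝ => fderiv ℝ (fun q : ℝ × ℝ => u q.1 q.2) p v) :=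
  (hu.fderiv_right (by simp)).clm_apply contDiff_const

lemma smooth_px (hu : Smooth2 u) : Smooth2 (px u) := by
  have : (fun p : ℝ × ℝ => px u p.1 p.2)
      = fun p : ℝ × ℝ => fderiv ℝ (fun q : ℝ × ℝ => u q.1 q.2) p (0, 1) := by
    funext p; exact px_eq hu p.1 p.2
  rw [Smooth2, this]; exact smooth_fderiv_apply hu _

lemma mixed_partials (hu : Smooth2 u) (t x : ℝ) :
    pt (px u) t x = px (pt u) t x := by
  set F : ℝ × ℝ → ℝ := fun p => u p.1 p.2 with hF
  set f' : ℝ × ℝ → (ℝ × ℝ) →L[ℝ] ℝ := fderiv ℝ F with hf'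
  have hdF : ∀ y, HasFDerivAt F (f' y) y := fun y =>
    (hu.differentiable (by simp) y).hasFDerivAt
  have hf'd : Differentiable ℝ f' := (hu.fderiv_right (m := 1) (by exact WithTop.coe_le_coe.mpr le_top)).differentiable one_ne_zero
  have hsnd : HasFDerivAt f' (fderiv ℝ f' (t, x)) (t, x) := (hf'd (t, x)).hasFDerivAt
  have hsym := second_derivative_symmetric hdF hsnd (1, 0) (0, 1)
  -- pt (px u) t x = f'' (1,0) (0,1)
  have h1 : pt (px u) t x = fderiv ℝ f' (t, x) (1, 0) (0, 1) := by
    have hg : ∀ s y : ℝ, px u s y = f' (s, y) (0, 1) := fun s y => px_eq hu s y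
    have hG : HasDerivAt (fun s => f' (s, x) (0, 1))
        (fderiv ℝ f' (t, x) (1, 0) (0, 1)) t := by
      have hclm : HasFDerivAt (fun p : ℝ × ℝ => f' p (0, 1))
          ((fderiv ℝ f' (t, x)).flip (0, 1)) (t, x) := hsnd.clm_apply (hasFDerivAt_const _ _)
          |>.congr_fderiv (by refine ContinuousLinearMap.ext fun v => ?_; simp [ContinuousLinearMap.comp_zero])
      have hc : HasDerivAt (fun s : ℝ => (s, x)) ((1 : ℝ), (0 : ℝ)) t :=
        HasDerivAt.prodMk (hasDerivAt_id t) (hasDerivAt_const t x)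
      refine (hclm.comp_hasDerivAt t hc).congr_deriv ?_; simp
    have : (fun s => px u s x) = fun s => f' (s, x) (0, 1) := funext fun s => hg s x
    show deriv (fun s => px u s x) t = _
    rw [this]; exact hG.deriv
  have h2 : px (pt u) t x = fderiv ℝ f' (t, x) (0, 1) (1, 0) := by
    have hg : ∀ s y : ℝ, pt u s y = f' (s, y) (1, 0) := fun s y => pt_eq hu s y
    have hG : HasDerivAt (fun y => f' (t, y) (1, 0))
        (fderiv ℝ f' (t, x) (0, 1) (1, 0)) x := by
      have hclm : HasFDerivAt (fun p : ℝ × ℝ => f' p (1, 0))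
          ((fderiv ℝ f' (t, x)).flip (1, 0)) (t, x) := hsnd.clm_apply (hasFDerivAt_const _ _)
          |>.congr_fderiv (by refine ContinuousLinearMap.ext fun v => ?_; simp [ContinuousLinearMap.comp_zero])
      have hc : HasDerivAt (fun y : ℝ => (t, y)) ((0 : ℝ), (1 : ℝ)) x :=
        HasDerivAt.prodMk (hasDerivAt_const x t) (hasDerivAt_id x)
      exact (hclm.comp_hasDerivAt x hc).congr_deriv (by simp)
    have : (fun y => pt u t y) = fun y => f' (t, y) (1, 0) := funext fun y => hg t y
    show deriv (fun y => pt u t y) x = _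
    rw [this]; exact hG.deriv
  rw [h1, h2, hsym]

end Helpers

/-- Local conservation law for the generalized Kaup–Kupershmidt −1 flow. -/
theorem kk_gen_neg1_conservation
    (κ : ℝ) (u h h1 h2 w : ℝ → ℝ → ℝ)
    (hu : Smooth2 u) (hh : Smooth2 h) (hh1 : Smooth2 h1) (hh2 : Smooth2 h2) (hw : Smooth2 w)
    (sys1 : ∀ t x, pt u t x = h t x)
    (sys2 : ∀ t x, px (px (px w)) t x + u t x * px w t x + (1/2) * px u t x * w t x = κ * h t x)
    (sys3 : ∀ t x, w t x = px (px (px h)) t x + 5 * u t x * px h t x + (5/2) * px u t x * h t x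
      + (px (px u) t x + 2 * (u t x)^2) * h1 t x + h2 t x)
    (sys4 : ∀ t x, px h1 t x = h t x)
    (sys5 : ∀ t x, px h2 t x = (px (px u) t x + 2 * (u t x)^2) * h t x) :
    ∀ t x, pt (fun t x => -(1/2) * (px u t x)^2 + (2/3) * (u t x)^3) t x
      = px (fun t x => h2 t x - px u t x * h t x) t x := by
  intro t x
  have hpxu : Smooth2 (px u) := smooth_px hu
  -- LHS
  have hL : HasDerivAt (fun s => -(1/2) * (px u s x)^2 + (2/3) * (u s x)^3)
      (-(1/2) * (2 * px u t x ^ 1 * pt (px u) t x)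
        + (2/3) * (3 * u t x ^ 2 * pt u t x)) t := by
    have h1 := ((hasDerivAt_pt hpxu t x).pow 2).const_mul (-(1/2) : ℝ)
    have h2 := ((hasDerivAt_pt hu t x).pow 3).const_mul ((2/3) : ℝ)
    exact (h1.add h2).congr_deriv (by norm_num)
  -- RHS
  have hR : HasDerivAt (fun y => h2 t y - px u t y * h t y)
      (px h2 t x - (px (px u) t x * h t x + px u t x * px h t x)) x := by
    exact (hasDerivAt_px hh2 t x).sub
      ((hasDerivAt_px hpxu t x).mul (hasDerivAt_px hh t x))
  have hLd : pt (fun t x => -(1/2) * (px u t x)^2 + (2/3) * (u t x)^3) t x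
      = -(1/2) * (2 * px u t x ^ 1 * pt (px u) t x)
        + (2/3) * (3 * u t x ^ 2 * pt u t x) := hL.deriv
  have hRd : px (fun t x => h2 t x - px u t x * h t x) t x
      = px h2 t x - (px (px u) t x * h t x + px u t x * px h t x) := hR.deriv
  rw [hLd, hRd, sys5, sys1, mixed_partials hu]
  have hpt : px (pt u) t x = px h t x := by
    show deriv (fun y => pt u t y) x = deriv (fun y => h t y) x
    congr 1; funext y; exact sys1 t y
  rw [hpt]
  ring
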